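/- arXiv:1311.0245 — 2 statements merged into one kernel-verified Lean document; each statement's English description precedes it below -/
import Mathlib

section
/- The function d satisfies a quasi-triangle inequality: there exists a constant C > 0 such that d(x,z) ≤ C(d(x,y) + d(y,z)) for all x, y, z ∈ ℝ^N. -/
open scoped BigOperators

/-- Euclidean norm on `Fin m → ℝ`. -/
noncomputable def euclN {m : ℕ} (x : Fin m → ℝ) : ℝ := Real.sqrt (∑ i, (x i) ^ 2)

lemma euclN_nonneg {m : ℕ} (x : Fin m → ℝ) : 0 ≤ euclN x := Real.sqrt_nonneg _

lemma abs_coord_le_euclN {m : ℕ} (x : Fin m → ℝ) (j : Fin m) : |x j| ≤ euclN x := by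
  rw [← Real.sqrt_sq_eq_abs]
  exact Real.sqrt_le_sqrt (Finset.single_le_sum (fun i _ => sq_nonneg (x i)) (Finset.mem_univ j))

lemma euclN_eq_norm {m : ℕ} (x : Fin m → ℝ) :
    euclN x = ‖(WithLp.equiv 2 (Fin m → ℝ)).symm x‖ := by
  rw [EuclideanSpace.norm_eq]
  simp [euclN, sq_abs]

lemma euclN_triangle {m : ℕ} (x y z : Fin m → ℝ) :
    euclN (x - z) ≤ euclN (x - y) + euclN (y - z) := by
  rw [euclN_eq_norm, euclN_eq_norm, euclN_eq_norm]
  have : (WithLp.equiv 2 (Fin m → ℝ)).symm (x - z) =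
      (WithLp.equiv 2 (Fin m → ℝ)).symm (x - y) + (WithLp.equiv 2 (Fin m → ℝ)).symm (y - z) := by
    simp [WithLp.equiv_symm_apply, WithLp.toLp_sub, WithLp.toLp_add]
  rw [this]
  exact norm_add_le _ _

lemma pi_norm_le_euclN {m : ℕ} (x : Fin m → ℝ) : ‖x‖ ≤ euclN x := by
  cases m with
  | zero =>
    rw [Subsingleton.elim x 0]
    rw [norm_zero]; exact euclN_nonneg (0 : Fin 0 → ℝ)
  | succ m =>
    apply pi_norm_le_iff_of_nonneg (euclN_nonneg x) |>.2
    intro i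
    simpa using abs_coord_le_euclN x i

lemma sqrt_add_le (a b : ℝ) (ha : 0 ≤ a) (hb : 0 ≤ b) :
    Real.sqrt (a + b) ≤ Real.sqrt a + Real.sqrt b := by
  have h : a + b ≤ (Real.sqrt a + Real.sqrt b) ^ 2 := by
    nlinarith [Real.sq_sqrt ha, Real.sq_sqrt hb, Real.sqrt_nonneg a, Real.sqrt_nonneg b]
  calc Real.sqrt (a + b) ≤ Real.sqrt ((Real.sqrt a + Real.sqrt b) ^ 2) := Real.sqrt_le_sqrt h
    _ = Real.sqrt a + Real.sqrt b := Real.sqrt_sq (by positivity)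

lemma lip_of_bdd {m : ℕ} (f : (Fin m → ℝ) → ℝ) (hf : ContDiff ℝ (⊤ : ℕ∞) f) (C : ℝ)
    (hC : ∀ x, ‖iteratedFDeriv ℝ 1 f x‖ ≤ C) (x y : Fin m → ℝ) :
    |f x - f y| ≤ C * ‖x - y‖ := by
  have hfd : ∀ z ∈ (Set.univ : Set (Fin m → ℝ)), DifferentiableAt ℝ f z :=
    fun z _ => (hf.differentiable (by simp)) z
  have hbound : ∀ z ∈ (Set.univ : Set (Fin m → ℝ)), ‖fderiv ℝ f z‖ ≤ C := by
    intro z _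
    apply ContinuousLinearMap.opNorm_le_bound _ (le_trans (norm_nonneg _) (hC z))
    intro v
    have : fderiv ℝ f z v = iteratedFDeriv ℝ 1 f z (fun _ => v) := by
      rw [iteratedFDeriv_one_apply]
    rw [this]
    calc ‖iteratedFDeriv ℝ 1 f z (fun _ => v)‖
        ≤ ‖iteratedFDeriv ℝ 1 f z‖ * ∏ _i : Fin 1, ‖v‖ :=
          (iteratedFDeriv ℝ 1 f z).le_opNorm _
      _ = ‖iteratedFDeriv ℝ 1 f z‖ * ‖v‖ := by simp
      _ ≤ C * ‖v‖ := by gcongr; exact hC z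
  have := (convex_univ : Convex ℝ (Set.univ : Set (Fin m → ℝ))).norm_image_sub_le_of_norm_fderiv_le
    hfd hbound (Set.mem_univ y) (Set.mem_univ x)
  simpa [Real.norm_eq_abs] using this

/-- `Θ₀(x,y)_i = Σ_j B_j^i(x)(x^j - y^j)`, where `B x i j = B_j^i(x)`. -/
noncomputable def Theta (d : ℕ) (B : (Fin (d+1) → ℝ) → Fin (d+1) → Fin (d+1) → ℝ)
    (x y : Fin (d+1) → ℝ) (i : Fin (d+1)) : ℝ :=
  ∑ j, B x i j * (x j - y j)

/-- The quasi-distance `d(x,y) = |x-y| + |Θ₀(x,y)_N|^{1/2}`. -/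
noncomputable def dq (d : ℕ) (B : (Fin (d+1) → ℝ) → Fin (d+1) → Fin (d+1) → ℝ)
    (x y : Fin (d+1) → ℝ) : ℝ :=
  euclN (x - y) + Real.sqrt |Theta d B x y (Fin.last d)|

/-- quasi-triangle inequality for `d`. -/
theorem dq_quasi_triangle (d : ℕ)
    (B : (Fin (d+1) → ℝ) → Fin (d+1) → Fin (d+1) → ℝ)
    (hB_smooth : ∀ i j, ContDiff ℝ (⊤ : ℕ∞) (fun x => B x i j))
    (hB_bdd : ∀ (i j : Fin (d+1)) (k : ℕ), ∃ Ck : ℝ, ∀ x,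
      ‖iteratedFDeriv ℝ k (fun x => B x i j) x‖ ≤ Ck)
    (hB_det : ∃ c₀ : ℝ, 0 < c₀ ∧ ∀ x, c₀ ≤ |(Matrix.of (B x)).det|) :
    ∃ C : ℝ, 0 < C ∧ ∀ x y z : Fin (d+1) → ℝ,
      dq d B x z ≤ C * (dq d B x y + dq d B y z) := by
  classical
  set N := Fin.last d
  choose C1 hC1 using fun j => hB_bdd N j 1
  set L : ℝ := ∑ j, max (C1 j) 0 with hLdef
  have hL : 0 ≤ L := Finset.sum_nonneg fun j _ => le_max_right _ _
  refine ⟨2 + Real.sqrt L, by positivity, fun x y z => ?_⟩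
  set e1 := euclN (x - y) with he1
  set e2 := euclN (y - z) with he2
  have he1n : 0 ≤ e1 := euclN_nonneg _
  have he2n : 0 ≤ e2 := euclN_nonneg _
  -- decomposition
  have key : Theta d B x z N = Theta d B x y N + Theta d B y z N
      + ∑ j, (B x N j - B y N j) * (y j - z j) := by
    simp only [Theta, ← Finset.sum_add_distrib]
    exact Finset.sum_congr rfl fun j _ => by ring
  -- bound the error sum
  have herr : |∑ j, (B x N j - B y N j) * (y j - z j)| ≤ L * e1 * e2 := by
    calc |∑ j, (B x N j - B y N j) * (y j - z j)|
        ≤ ∑ j, |(B x N j - B y N j) * (y j - z j)| := Finset.abs_sum_le_sum_abs _ _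
      _ ≤ ∑ j : Fin (d+1), max (C1 j) 0 * e1 * e2 := by
          apply Finset.sum_le_sum
          intro j _
          rw [abs_mul]
          have h1 : |B x N j - B y N j| ≤ max (C1 j) 0 * e1 := by
            have := lip_of_bdd (fun x => B x N j) (hB_smooth N j) (max (C1 j) 0)
              (fun w => le_trans (hC1 j w) (le_max_left _ _)) x y
            calc |B x N j - B y N j| ≤ max (C1 j) 0 * ‖x - y‖ := this
              _ ≤ max (C1 j) 0 * e1 :=
                  mul_le_mul_of_nonneg_left (pi_norm_le_euclN _) (le_max_right _ _)
          have h2 : |y j - z j| ≤ e2 := by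
            simpa using abs_coord_le_euclN (y - z) j
          calc |B x N j - B y N j| * |y j - z j|
              ≤ (max (C1 j) 0 * e1) * e2 := by
                apply mul_le_mul h1 h2 (abs_nonneg _)
                positivity
            _ = max (C1 j) 0 * e1 * e2 := by ring
      _ = L * e1 * e2 := by rw [hLdef, Finset.sum_mul, Finset.sum_mul]
  have hTabs : |Theta d B x z N| ≤ |Theta d B x y N| + |Theta d B y z N| + L * e1 * e2 := by
    rw [key]
    calc |Theta d B x y N + Theta d B y z N + ∑ j, (B x N j - B y N j) * (y j - z j)|
        ≤ |Theta d B x y N + Theta d B y z N| + |∑ j, (B x N j - B y N j) * (y j - z j)| :=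
          abs_add_le _ _
      _ ≤ (|Theta d B x y N| + |Theta d B y z N|) + L * e1 * e2 :=
          add_le_add (abs_add_le _ _) herr
  -- sqrt bounds
  set s1 := Real.sqrt |Theta d B x y N| with hs1
  set s2 := Real.sqrt |Theta d B y z N| with hs2
  have hs1n : 0 ≤ s1 := Real.sqrt_nonneg _
  have hs2n : 0 ≤ s2 := Real.sqrt_nonneg _
  have hsqrt : Real.sqrt |Theta d B x z N| ≤ s1 + s2 + Real.sqrt L * (e1 + e2) := by
    calc Real.sqrt |Theta d B x z N|
        ≤ Real.sqrt (|Theta d B x y N| + |Theta d B y z N| + L * e1 * e2) :=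
          Real.sqrt_le_sqrt hTabs
      _ ≤ Real.sqrt (|Theta d B x y N| + |Theta d B y z N|) + Real.sqrt (L * e1 * e2) :=
          sqrt_add_le _ _ (by positivity) (by positivity)
      _ ≤ (s1 + s2) + Real.sqrt (L * e1 * e2) := by
          gcongr
          exact sqrt_add_le _ _ (abs_nonneg _) (abs_nonneg _)
      _ ≤ s1 + s2 + Real.sqrt L * (e1 + e2) := by
          gcongr
          rw [mul_assoc, Real.sqrt_mul hL]
          gcongr
          calc Real.sqrt (e1 * e2) ≤ Real.sqrt ((e1 + e2) ^ 2) :=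
                Real.sqrt_le_sqrt (by nlinarith)
            _ = e1 + e2 := Real.sqrt_sq (by linarith)
  -- assemble
  have htr : euclN (x - z) ≤ e1 + e2 := euclN_triangle x y z
  have hLs : 0 ≤ Real.sqrt L := Real.sqrt_nonneg _
  show euclN (x - z) + Real.sqrt |Theta d B x z N|
      ≤ (2 + Real.sqrt L) * ((e1 + s1) + (e2 + s2))
  nlinarith [mul_nonneg hLs hs1n, mul_nonneg hLs hs2n]
end

section
/- If d(x,y) < 1, then d(x,y) ≍ Σ_{i=1}^{N-1} |Θ₀(x,y)_i| + |Θ₀(x,y)_N|^{1/2}, i.e. there exist absolute constants c, C > 0 such that c·d(x,y) ≤ Σ_{i<N} |Θ₀(x,y)_i| + |Θ₀(x,y)_N|^{1/2} ≤ C·d(x,y) whenever d(x,y) < 1. -/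
open scoped BigOperators

lemma abs_le_euclN {m : ℕ} (x : Fin m → ℝ) (k : Fin m) : |x k| ≤ euclN x := by
  rw [← Real.sqrt_sq_eq_abs]
  exact Real.sqrt_le_sqrt (Finset.single_le_sum (f := fun i => (x i)^2)
    (fun i _ => sq_nonneg _) (Finset.mem_univ k))

lemma euclN_le_sum_abs {m : ℕ} (x : Fin m → ℝ) : euclN x ≤ ∑ k, |x k| := by
  have h : ∑ i, (x i)^2 ≤ (∑ k, |x k|)^2 := by
    rw [sq]
    rw [Finset.sum_mul]
    refine Finset.sum_le_sum fun i _ => ?_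
    have h1 : |x i| ≤ ∑ k, |x k| :=
      Finset.single_le_sum (f := fun k => |x k|) (fun k _ => abs_nonneg _) (Finset.mem_univ i)
    calc (x i)^2 = |x i| * |x i| := by rw [sq]; exact (abs_mul_abs_self (x i)).symm
    _ ≤ |x i| * ∑ k, |x k| := by
        exact mul_le_mul_of_nonneg_left h1 (abs_nonneg _)
  calc euclN x ≤ Real.sqrt ((∑ k, |x k|)^2) := Real.sqrt_le_sqrt h
  _ = ∑ k, |x k| := Real.sqrt_sq (Finset.sum_nonneg fun k _ => abs_nonneg _)

/-- for `d(x,y) < 1`, `d(x,y) ≍ Σ_{i<N} |Θ₀(x,y)_i| + |Θ₀(x,y)_N|^{1/2}`. -/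
theorem dq_comparable_theta_near (d : ℕ)
    (B : (Fin (d+1) → ℝ) → Fin (d+1) → Fin (d+1) → ℝ)
    (hB_smooth : ∀ i j, ContDiff ℝ (⊤ : ℕ∞) (fun x => B x i j))
    (hB_bdd : ∀ (i j : Fin (d+1)) (k : ℕ), ∃ Ck : ℝ, ∀ x,
      ‖iteratedFDeriv ℝ k (fun x => B x i j) x‖ ≤ Ck)
    (hB_det : ∃ c₀ : ℝ, 0 < c₀ ∧ ∀ x, c₀ ≤ |(Matrix.of (B x)).det|) :
    ∃ c C : ℝ, 0 < c ∧ 0 < C ∧ ∀ x y : Fin (d+1) → ℝ, dq d B x y < 1 →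
      c * dq d B x y ≤ (∑ i : Fin d, |Theta d B x y i.castSucc|)
          + Real.sqrt |Theta d B x y (Fin.last d)| ∧
      (∑ i : Fin d, |Theta d B x y i.castSucc|)
          + Real.sqrt |Theta d B x y (Fin.last d)| ≤ C * dq d B x y := by
  obtain ⟨c₀, hc₀, hdet⟩ := hB_det
  -- uniform bound on entries, at least 1
  obtain ⟨M, hM1, hMb⟩ : ∃ M : ℝ, 1 ≤ M ∧ ∀ x i j, |B x i j| ≤ M := by
    choose Cf hCf using fun i j => hB_bdd i j 0
    refine ⟨max 1 (∑ i, ∑ j, Cf i j), le_max_left _ _, fun x i j => ?_⟩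
    have h1 : |B x i j| ≤ Cf i j := by
      have := hCf i j x
      simpa [norm_iteratedFDeriv_zero, Real.norm_eq_abs] using this
    have hnn : ∀ i' j', 0 ≤ Cf i' j' := fun i' j' =>
      le_trans (norm_nonneg _) (hCf i' j' x)
    refine h1.trans (le_trans ?_ (le_max_right _ _))
    calc Cf i j ≤ ∑ j', Cf i j' :=
          Finset.single_le_sum (fun j' _ => hnn i j') (Finset.mem_univ j)
    _ ≤ ∑ i', ∑ j', Cf i' j' :=
          Finset.single_le_sum (f := fun i' => ∑ j', Cf i' j')
            (fun i' _ => Finset.sum_nonneg fun j' _ => hnn i' j') (Finset.mem_univ i)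
  have hM0 : (0:ℝ) < M := lt_of_lt_of_le one_pos hM1
  set Kadj : ℝ := (d+1).factorial * M ^ (d+1) with hKadj_def
  have hKadj_pos : 0 < Kadj := by positivity
  set K1 : ℝ := (d+1) * Kadj / c₀ with hK1_def
  have hK1_pos : 0 < K1 := by positivity
  refine ⟨(K1+1)⁻¹, d*(d+1)*M + 1, by positivity, by positivity, fun x y hxy => ?_⟩
  set v : Fin (d+1) → ℝ := x - y with hv_def
  set A : Matrix (Fin (d+1)) (Fin (d+1)) ℝ := Matrix.of (B x) with hA_def
  have hAe : ∀ i j, |A i j| ≤ M := fun i j => hMb x i j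
  have hTheta : ∀ i, Theta d B x y i = A.mulVec v i := fun i => rfl
  set S : ℝ := ∑ i : Fin d, |Theta d B x y i.castSucc| with hS_def
  set T : ℝ := |Theta d B x y (Fin.last d)| with hT_def
  have hSnn : 0 ≤ S := Finset.sum_nonneg fun i _ => abs_nonneg _
  have hTnn : 0 ≤ T := abs_nonneg _
  have hsT : 0 ≤ Real.sqrt T := Real.sqrt_nonneg _
  have hSsum : ∑ i, |Theta d B x y i| = S + T := by
    rw [Fin.sum_univ_castSucc]
  have hdq : dq d B x y = euclN v + Real.sqrt T := rfl
  have he : 0 ≤ euclN v := euclN_nonneg v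
  -- adjugate entries bounded
  have hadj : ∀ k i, |A.adjugate k i| ≤ Kadj := by
    intro k i
    rw [Matrix.adjugate_apply]
    have hent : ∀ a b, |(A.updateRow i (Pi.single k 1)) a b| ≤ M := by
      intro a b
      rw [Matrix.updateRow_apply]
      by_cases hai : a = i
      · simp only [hai, if_pos rfl]
        rcases eq_or_ne b k with hbk | hbk
        · rw [Pi.single_apply, if_pos hbk]; simpa using hM1
        · rw [Pi.single_apply, if_neg hbk]; simpa using hM0.le
      · simp only [if_neg hai]; exact hAe a b
    have := Matrix.det_le (A := A.updateRow i (Pi.single k 1))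
      (abv := AbsoluteValue.abs) (x := M) hent
    simpa [Fintype.card_fin, nsmul_eq_mul, hKadj_def] using this
  -- Cramer: det A • v = adjugate A *ᵥ (A *ᵥ v)
  have hcramer : A.det • v = A.adjugate.mulVec (A.mulVec v) := by
    rw [Matrix.mulVec_mulVec, Matrix.adjugate_mul, Matrix.smul_mulVec, Matrix.one_mulVec]
  have hcomp : ∀ k, |v k| ≤ Kadj * (S + T) / c₀ := by
    intro k
    have h1 : A.det * v k = ∑ i, A.adjugate k i * (A.mulVec v) i := by
      have := congrFun hcramer k
      simpa [Matrix.mulVec, dotProduct, Pi.smul_apply, smul_eq_mul] using this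
    have h2 : |A.det| * |v k| ≤ Kadj * (S + T) := by
      rw [← abs_mul, h1, ← hSsum]
      calc |∑ i, A.adjugate k i * (A.mulVec v) i|
          ≤ ∑ i, |A.adjugate k i * (A.mulVec v) i| := Finset.abs_sum_le_sum_abs _ _
      _ ≤ ∑ i, Kadj * |Theta d B x y i| := by
          refine Finset.sum_le_sum fun i _ => ?_
          rw [abs_mul, ← hTheta i]
          exact mul_le_mul_of_nonneg_right (hadj k i) (abs_nonneg _)
      _ = Kadj * ∑ i, |Theta d B x y i| := by rw [Finset.mul_sum]
    have h3 : c₀ * |v k| ≤ Kadj * (S + T) :=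
      le_trans (mul_le_mul_of_nonneg_right (hdet x) (abs_nonneg _)) h2
    rw [le_div_iff₀ hc₀]
    linarith [h3]
  have heucl : euclN v ≤ K1 * (S + T) := by
    calc euclN v ≤ ∑ k, |v k| := euclN_le_sum_abs v
    _ ≤ ∑ _k : Fin (d+1), Kadj * (S + T) / c₀ :=
        Finset.sum_le_sum fun k _ => hcomp k
    _ = (d+1) * (Kadj * (S + T) / c₀) := by
        rw [Finset.sum_const, Finset.card_univ, Fintype.card_fin, nsmul_eq_mul]
        push_cast; ring
    _ = K1 * (S + T) := by rw [hK1_def]; field_simp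
  -- T ≤ √T since T < 1
  have hsTlt : Real.sqrt T < 1 := by
    rw [hdq] at hxy; linarith
  have hTlt : T < 1 := by
    have := Real.sq_sqrt hTnn
    nlinarith [hsT]
  have hTle : T ≤ Real.sqrt T := by
    rw [Real.le_sqrt hTnn hTnn]
    nlinarith
  constructor
  · -- lower bound
    have hdqle : dq d B x y ≤ (K1 + 1) * (S + Real.sqrt T) := by
      rw [hdq]
      have h4 : K1 * (S + T) ≤ K1 * (S + Real.sqrt T) :=
        mul_le_mul_of_nonneg_left (by linarith) (le_of_lt hK1_pos)
      nlinarith [heucl]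
    rw [inv_mul_le_iff₀ (by positivity)]
    calc dq d B x y ≤ (K1+1) * (S + Real.sqrt T) := hdqle
    _ = (K1+1) * (S + Real.sqrt T) := rfl
  · -- upper bound
    have hThle : ∀ i : Fin (d+1), |Theta d B x y i| ≤ (d+1) * M * euclN v := by
      intro i
      rw [hTheta i]
      calc |A.mulVec v i| = |∑ j, A i j * v j| := rfl
      _ ≤ ∑ j, |A i j * v j| := Finset.abs_sum_le_sum_abs _ _
      _ ≤ ∑ _j : Fin (d+1), M * euclN v := by
          refine Finset.sum_le_sum fun j _ => ?_
          rw [abs_mul]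
          exact mul_le_mul (hAe i j) (abs_le_euclN v j) (abs_nonneg _) (le_of_lt hM0)
      _ = (d+1) * M * euclN v := by
          rw [Finset.sum_const, Finset.card_univ, Fintype.card_fin, nsmul_eq_mul]
          push_cast; ring
    have hSle : S ≤ d * ((d+1) * M * euclN v) := by
      rw [hS_def]
      calc ∑ i : Fin d, |Theta d B x y i.castSucc|
          ≤ ∑ _i : Fin d, (d+1) * M * euclN v :=
            Finset.sum_le_sum fun i _ => hThle i.castSucc
      _ = d * ((d+1) * M * euclN v) := by
          rw [Finset.sum_const, Finset.card_univ, Fintype.card_fin, nsmul_eq_mul]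
    have h5 : 0 ≤ (d:ℝ) * ((d:ℝ)+1) * M * Real.sqrt T := by positivity
    rw [hdq]
    nlinarith [hSle, he, hsT, h5]
end
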